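/- arXiv:math/0604002 — 2 statements merged into one kernel-verified Lean document; each statement's English description precedes it below -/
import Mathlib

section
/- Let K be a field and let (p₁₂, p₁₃, p₁₄, p₂₃, p₂₄, p₃₄) ∈ K⁶ be a nonzero sextuple satisfying the Plücker relation p₁₂·p₃₄ − p₁₃·p₂₄ + p₁₄·p₂₃ = 0. Then there exists a 2×4 matrix A over K whose 2×2 minors satisfy M_{ij}(A) = p_{ij} for all 1 ≤ i < j ≤ 4. -/
/-!
Arrange the sextuple into the alternating 4×4 matrix `P` with `P i j = p_ij` for `i < j`. The
Plücker relation is, up to sign, the only nontrivial instance of the Grassmann–Plücker relations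
`P i j * P k l - P i k * P j l + P i l * P j k = 0`. If `P i j ≠ 0`, these relations say exactly
that the 2×2 minors of the two-row matrix with rows `(P i j)⁻¹ • P i` and `P j` are the `P k l`.
-/

section

variable {K : Type*} [Field K]

def pluckerMatrix (p12 p13 p14 p23 p24 p34 : K) : Matrix (Fin 4) (Fin 4) K :=
  !![0, p12, p13, p14; -p12, 0, p23, p24; -p13, -p23, 0, p34; -p14, -p24, -p34, 0]

theorem pluckerMatrix_grassmannPlucker {p12 p13 p14 p23 p24 p34 : K}
    (hpl : p12 * p34 - p13 * p24 + p14 * p23 = 0) (i j k l : Fin 4) :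
    let P := pluckerMatrix p12 p13 p14 p23 p24 p34
    P i j * P k l - P i k * P j l + P i l * P j k = 0 := by
  intro P
  fin_cases i <;> fin_cases j <;> fin_cases k <;> fin_cases l <;>
    simp only [P, pluckerMatrix, Fin.zero_eta, Fin.mk_one, Fin.reduceFinMk, Matrix.of_apply,
      Matrix.cons_val', Matrix.cons_val, Matrix.cons_val_fin_one, Matrix.cons_val_one,
      Matrix.cons_val_zero] <;>
    first | linear_combination | linear_combination hpl | linear_combination -hpl

theorem exists_twoRow_minors_eq {ι : Type*} (P : Matrix ι ι K) {i j : ι} (hij : P i j ≠ 0)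
    (hP : ∀ k l, P i j * P k l - P i k * P j l + P i l * P j k = 0) :
    ∃ A : Matrix (Fin 2) ι K, ∀ k l, A 0 k * A 1 l - A 0 l * A 1 k = P k l :=
  ⟨Matrix.of ![(P i j)⁻¹ • P i, P j], fun k l => by
    simp only [Matrix.of_apply, Matrix.cons_val_zero, Matrix.cons_val_one, Pi.smul_apply,
      smul_eq_mul]
    field_simp
    linear_combination -hP k l⟩

end

/-- Any nonzero sextuple over a field satisfying the Plücker relation
`p₁₂p₃₄ − p₁₃p₂₄ + p₁₄p₂₃ = 0` is the sextuple of 2×2 minors of some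
2×4 matrix. -/
theorem plucker_sextuple_is_minors {K : Type*} [Field K]
    (p12 p13 p14 p23 p24 p34 : K)
    (hne : ¬(p12 = 0 ∧ p13 = 0 ∧ p14 = 0 ∧ p23 = 0 ∧ p24 = 0 ∧ p34 = 0))
    (hpl : p12 * p34 - p13 * p24 + p14 * p23 = 0) :
    ∃ A : Matrix (Fin 2) (Fin 4) K,
      A 0 0 * A 1 1 - A 0 1 * A 1 0 = p12 ∧
      A 0 0 * A 1 2 - A 0 2 * A 1 0 = p13 ∧
      A 0 0 * A 1 3 - A 0 3 * A 1 0 = p14 ∧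
      A 0 1 * A 1 2 - A 0 2 * A 1 1 = p23 ∧
      A 0 1 * A 1 3 - A 0 3 * A 1 1 = p24 ∧
      A 0 2 * A 1 3 - A 0 3 * A 1 2 = p34 := by
  set P := pluckerMatrix p12 p13 p14 p23 p24 p34
  obtain ⟨i, j, hij⟩ : ∃ i j, P i j ≠ 0 := by
    by_contra! hP
    exact hne ⟨hP 0 1, hP 0 2, hP 0 3, hP 1 2, hP 1 3, hP 2 3⟩
  obtain ⟨A, hA⟩ := exists_twoRow_minors_eq P hij (pluckerMatrix_grassmannPlucker hpl i j)
  exact ⟨A, hA 0 1, hA 0 2, hA 0 3, hA 1 2, hA 1 3, hA 2 3⟩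
end

section
/- Let Y ∈ ℝ⁴, set a = (Y, Y) and b = (Y, Y*), and assume b ≠ 0 and b² < a². Define p = (a − √(a² − b²))/b and X = (1 − p²)⁻¹ · (Y − p·Y*). Then X satisfies the Plücker condition (X, X*) = 0, i.e. x₁·x₂ + x₃·x₄ = 0, and moreover X + p·X* = Y. -/
/-- The swapped vector `Y* = (y₂, y₁, y₄, y₃)` of `Y = (y₁, y₂, y₃, y₄)`. -/
def star4 (Y : Fin 4 → ℝ) : Fin 4 → ℝ := ![Y 1, Y 0, Y 3, Y 2]

/-- The standard Euclidean inner product on `ℝ⁴`. -/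
def ip4 (X Y : Fin 4 → ℝ) : ℝ := ∑ i, X i * Y i

/-- With `a = (Y,Y)`, `b = (Y,Y*)`, `b ≠ 0`, `b² < a²`,
`p = (a − √(a² − b²))/b` and `X = (1 − p²)⁻¹ • (Y − p • Y*)`, the vector `X`
lies on the Plücker quadric `(X, X*) = 0`, i.e. `x₁x₂ + x₃x₄ = 0`, and
moreover `X + p • X* = Y`. -/
theorem lagrange_solution_on_plucker_quadric (Y : Fin 4 → ℝ)
    (a b : ℝ) (ha : a = ip4 Y Y) (hbdef : b = ip4 Y (star4 Y))
    (hb : b ≠ 0) (hba : b ^ 2 < a ^ 2)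
    (p : ℝ) (hp : p = (a - Real.sqrt (a ^ 2 - b ^ 2)) / b)
    (X : Fin 4 → ℝ) (hX : X = (1 - p ^ 2)⁻¹ • (Y - p • star4 Y)) :
    ip4 X (star4 X) = 0 ∧ X 0 * X 1 + X 2 * X 3 = 0 ∧ X + p • star4 X = Y := by
  have hs : Real.sqrt (a ^ 2 - b ^ 2) ^ 2 = a ^ 2 - b ^ 2 :=
    Real.sq_sqrt (le_of_lt (sub_pos.2 hba))
  have hq : b * (1 + p ^ 2) = 2 * a * p := by
    subst hp; field_simp; nlinarith [hs]
  have hp2 : 1 - p ^ 2 ≠ 0 := by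
    intro h
    have hp1 : p ^ 2 = 1 := by linarith
    rw [hp1] at hq
    have hb2 : b = a * p := by linarith
    have : b ^ 2 = a ^ 2 := by rw [hb2]; nlinarith [hp1]
    nlinarith [hba]
  have hab : 2 * (Y 0 * Y 1 + Y 2 * Y 3) = b := by
    rw [hbdef]; simp [ip4, star4, Fin.sum_univ_four]; ring
  have haa : Y 0 ^ 2 + Y 1 ^ 2 + Y 2 ^ 2 + Y 3 ^ 2 = a := by
    rw [ha]; simp [ip4, Fin.sum_univ_four]; ring
  have hXi : ∀ i, X i = (1 - p ^ 2)⁻¹ * (Y i - p * star4 Y i) := by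
    intro i; rw [hX]; simp
  have h0 := hXi 0; have h1 := hXi 1; have h2 := hXi 2; have h3 := hXi 3
  simp only [star4, Matrix.cons_val_zero, Matrix.cons_val_one, Matrix.head_cons,
    Matrix.cons_val_two, Matrix.tail_cons, Matrix.cons_val_three] at h0 h1 h2 h3
  have key : X 0 * X 1 + X 2 * X 3 = 0 := by
    rw [h0, h1, h2, h3]
    have : (Y 0 - p * Y 1) * (Y 1 - p * Y 0) + (Y 2 - p * Y 3) * (Y 3 - p * Y 2)
        = 0 := by
      linear_combination ((1 + p ^ 2) / 2) * hab - p * haa + (1 / 2) * hq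
    linear_combination ((1 - p ^ 2)⁻¹) ^ 2 * this
  refine ⟨?_, key, ?_⟩
  · have : ip4 X (star4 X) = 2 * (X 0 * X 1 + X 2 * X 3) := by
      simp [ip4, star4, Fin.sum_univ_four]; ring
    rw [this, key]; ring
  · funext i
    have hs4 : star4 X i = (1 - p ^ 2)⁻¹ * (star4 Y i - p * Y i) := by
      fin_cases i <;> simp [star4, h0, h1, h2, h3]
    have hx : X i = (1 - p ^ 2)⁻¹ * (Y i - p * star4 Y i) := hXi i
    show X i + p * star4 X i = Y i
    rw [hx, hs4]
    field_simp
    ring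
end
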